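/- Every spline s ∈ S_{m,T} with compact support has a unique representation as a finite linear combination of truncated powers: s(t) = ∑_k a_k (t − t_k)_+^{m-1}. -/
import Mathlib


/-- The normalized B-spline `N_{m,k}` of order `m` on the knot sequence `T`,
defined by the Cox–de Boor recursion.  `N_{1,k} = χ_{(t_k, t_{k+1}]}`. -/
noncomputable def bspline (T : ℤ → ℝ) : ℕ → ℤ → ℝ → ℝ
  | 0, _, _ => 0
  | 1, k, t => if T k < t ∧ t ≤ T (k + 1) then 1 else 0
  | (m + 2), k, t =>
      (t - T k) / (T (k + (m : ℤ) + 1) - T k) * bspline T (m + 1) k t +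
      (T (k + (m : ℤ) + 2) - t) / (T (k + (m : ℤ) + 2) - T (k + 1)) * bspline T (m + 1) (k + 1) t


/-- The spline space `S_{m,T}`: functions that are `C^{m-2}` (for `m ≥ 2`) and agree with a
polynomial of degree `< m` on each knot interval `(t_i, t_{i+1}]`. -/
def IsSpline (T : ℤ → ℝ) (m : ℕ) (f : ℝ → ℝ) : Prop :=
  (2 ≤ m → ContDiff ℝ ((m - 2 : ℕ) : ℕ∞) f) ∧
  ∀ i : ℤ, ∃ p : Polynomial ℝ, p.natDegree < m ∧
    ∀ t ∈ Set.Ioc (T i) (T (i + 1)), f t = p.eval t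


/-- The truncated power `(t - a)_+^j`. -/
noncomputable def truncPow (a : ℝ) (j : ℕ) : ℝ → ℝ :=
  fun t => if a < t then (t - a) ^ j else 0


section AuxSplineRep
open Polynomial

lemma poly_eq_pow (q : Polynomial ℝ) (c : ℝ) (m : ℕ) (hdeg : q.natDegree < m)
    (hder : ∀ j < m - 1, (derivative^[j] q).eval c = 0) :
    q = C ((taylor c q).coeff (m - 1)) * (X - C c) ^ (m - 1) := by
  have htay : ∀ j, j ≠ m - 1 → (taylor c q).coeff j = 0 := by
    intro j hj
    rcases lt_or_gt_of_ne hj with h | h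
    · rw [taylor_coeff]
      have hD : Nat.factorial j • (hasseDeriv j q) = derivative^[j] q := by
        have := congrFun (factorial_smul_hasseDeriv (R := ℝ) j) q
        simpa using this
      have h2 : (Nat.factorial j • (hasseDeriv j q)).eval c = 0 := by rw [hD]; exact hder j h
      rw [eval_smul] at h2
      have hf : (Nat.factorial j : ℝ) ≠ 0 := Nat.cast_ne_zero.mpr (Nat.factorial_ne_zero j)
      simpa [smul_eq_zero, Nat.factorial_ne_zero] using h2
    · apply coeff_eq_zero_of_natDegree_lt
      rw [natDegree_taylor]
      omega
  have h1 : taylor c q = C ((taylor c q).coeff (m - 1)) * X ^ (m - 1) := by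
    ext n
    rw [coeff_C_mul, coeff_X_pow]
    by_cases hn : n = m - 1
    · simp [hn]
    · simp [hn, htay n hn]
  have h2 : q = ((taylor c q) : Polynomial ℝ).comp (X - C c) := by
    rw [taylor_apply, comp_assoc]
    simp
  set b := ((taylor c q).coeff (m - 1)) with hb
  conv_lhs => rw [h2, h1]
  simp [mul_comp, pow_comp]


lemma iter_deriv_sub (p q : Polynomial ℝ) (n : ℕ) :
    derivative^[n] (p - q) = derivative^[n] p - derivative^[n] q := by
  induction n with
  | zero => simp
  | succ k ih => simp [Function.iterate_succ_apply', ih]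

lemma iteratedDeriv_polyeval (p : Polynomial ℝ) (j : ℕ) :
    iteratedDeriv j (fun t : ℝ => p.eval t) = fun t => (derivative^[j] p).eval t := by
  induction j with
  | zero => simp [iteratedDeriv_zero]
  | succ n ih =>
    rw [iteratedDeriv_succ, ih, Function.iterate_succ_apply']
    funext t
    exact Polynomial.deriv (p := derivative^[n] p)

lemma deriv_match (s : ℝ → ℝ) (j : ℕ) (hc : Continuous (iteratedDeriv j s))
    (p : Polynomial ℝ) (a b : ℝ) (hab : a < b)
    (hsp : ∀ t ∈ Set.Ioo a b, s t = p.eval t)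
    (x : ℝ) (hx : x ∈ Set.Icc a b) :
    iteratedDeriv j s x = (derivative^[j] p).eval x := by
  have hxcl : x ∈ closure (Set.Ioo a b) := by rwa [closure_Ioo hab.ne]
  have hne : (nhdsWithin x (Set.Ioo a b)).NeBot := mem_closure_iff_nhdsWithin_neBot.mp hxcl
  have h1 : Filter.Tendsto (iteratedDeriv j s) (nhdsWithin x (Set.Ioo a b))
      (nhds (iteratedDeriv j s x)) :=
    (hc.continuousAt.tendsto).mono_left nhdsWithin_le_nhds
  have heq : ∀ y ∈ Set.Ioo a b,
      iteratedDeriv j s y = (derivative^[j] p).eval y := by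
    intro y hy
    have : iteratedDeriv j s y = iteratedDeriv j (fun t : ℝ => p.eval t) y := by
      apply Filter.EventuallyEq.iteratedDeriv_eq
      filter_upwards [isOpen_Ioo.mem_nhds hy] with t ht using hsp t ht
    rw [this, iteratedDeriv_polyeval]
  have h2 : Filter.Tendsto (iteratedDeriv j s) (nhdsWithin x (Set.Ioo a b))
      (nhds ((derivative^[j] p).eval x)) := by
    have hcont : Filter.Tendsto (fun t => (derivative^[j] p).eval t)
        (nhdsWithin x (Set.Ioo a b)) (nhds ((derivative^[j] p).eval x)) :=
      ((Polynomial.continuous _).continuousAt.tendsto).mono_left nhdsWithin_le_nhds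
    apply hcont.congr'
    filter_upwards [self_mem_nhdsWithin] with t ht using (heq t ht).symm
  exact tendsto_nhds_unique h1 h2

section MainSplineRep
open Polynomial

/-- Every compactly supported spline `s ∈ S_{m,T}` has a unique representation as a finite
linear combination of truncated powers `s(t) = ∑_k a_k (t − t_k)_+^{m-1}`. -/
theorem spline_truncated_power_representation (T : ℤ → ℝ) (hT : StrictMono T)
    (hTop : Filter.Tendsto T Filter.atTop Filter.atTop)
    (hBot : Filter.Tendsto T Filter.atBot Filter.atBot)
    (m : ℕ) (hm : 1 ≤ m) (s : ℝ → ℝ) (hs : IsSpline T m s) (hcs : HasCompactSupport s) :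
    ∃! a : ℤ → ℝ, (Function.support a).Finite ∧
      ∀ t, s t = ∑ᶠ k, a k * truncPow (T k) (m - 1) t := by
  classical
  obtain ⟨hsm, hpoly⟩ := hs
  choose p hdeg hp using hpoly
  obtain ⟨R, hR⟩ : ∃ R : ℝ, ∀ t, s t ≠ 0 → |t| ≤ R := by
    obtain ⟨R, hR⟩ := hcs.isCompact.isBounded.subset_closedBall 0
    refine ⟨R, fun t ht => ?_⟩
    have h1 : t ∈ tsupport s := subset_tsupport s ht
    have := hR h1
    simpa [Real.dist_eq] using this
  obtain ⟨i₀, hi₀⟩ := Filter.eventually_atBot.mp (hBot.eventually_le_atBot (-R - 1))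
  obtain ⟨i₁, hi₁⟩ := Filter.eventually_atTop.mp (hTop.eventually_ge_atTop (R + 1))
  have hSzero : ∀ i : ℤ, (∀ t ∈ Set.Ioc (T i) (T (i + 1)), s t = 0) → p i = 0 := by
    intro i h
    apply Polynomial.eq_zero_of_infinite_isRoot
    apply (Set.Ioc_infinite (hT (lt_add_one i))).mono
    intro t ht
    show (p i).IsRoot t
    rw [Polynomial.IsRoot.def, ← hp i t ht]
    exact h t ht
  have hpleft : ∀ i : ℤ, i < i₀ → p i = 0 := by
    intro i hi
    apply hSzero
    intro t ht
    by_contra hne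
    have h1 := hR t hne
    have h3 : T (i + 1) ≤ -R - 1 := hi₀ (i + 1) (by omega)
    rw [abs_le] at h1
    have := ht.2
    linarith
  have hpright : ∀ i : ℤ, i₁ ≤ i → p i = 0 := by
    intro i hi
    apply hSzero
    intro t ht
    by_contra hne
    have h1 := hR t hne
    have h3 : R + 1 ≤ T i := hi₁ i hi
    rw [abs_le] at h1
    have := ht.1
    linarith
  have hcont : ∀ j : ℕ, j < m - 1 → Continuous (iteratedDeriv j s) := by
    intro j hj
    have hm2 : 2 ≤ m := by omega
    refine (hsm hm2).continuous_iteratedDeriv j ?_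
    exact_mod_cast Nat.cast_le.mpr (by omega : j ≤ m - 2)
  have hmatch : ∀ (i : ℤ) (j : ℕ), j < m - 1 →
      iteratedDeriv j s (T i) = (derivative^[j] (p (i - 1))).eval (T i) ∧
      iteratedDeriv j s (T i) = (derivative^[j] (p i)).eval (T i) := by
    intro i j hj
    constructor
    · refine deriv_match s j (hcont j hj) (p (i - 1)) (T (i - 1)) (T i) (hT (by omega)) ?_ _
        (Set.right_mem_Icc.mpr (hT (by omega)).le)
      intro t ht
      have hmem : t ∈ Set.Ioc (T (i - 1)) (T ((i - 1) + 1)) := by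
        rw [show (i - 1) + 1 = i by ring]
        exact ⟨ht.1, ht.2.le⟩
      exact hp (i - 1) t hmem
    · refine deriv_match s j (hcont j hj) (p i) (T i) (T (i + 1)) (hT (by omega)) ?_ _
        (Set.left_mem_Icc.mpr (hT (by omega)).le)
      intro t ht
      exact hp i t ⟨ht.1, ht.2.le⟩
  set q : ℤ → Polynomial ℝ := fun i => p i - p (i - 1) with hqdef
  set a : ℤ → ℝ := fun i => (taylor (T i) (q i)).coeff (m - 1) with hadef
  have hq : ∀ i, q i = C (a i) * (X - C (T i)) ^ (m - 1) := by
    intro i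
    apply poly_eq_pow _ _ m
    · calc (q i).natDegree ≤ max (p i).natDegree (p (i - 1)).natDegree :=
            natDegree_sub_le _ _
        _ < m := max_lt (hdeg i) (hdeg (i - 1))
    · intro j hj
      obtain ⟨hL, hRt⟩ := hmatch i j hj
      rw [hqdef]
      simp only [iter_deriv_sub, eval_sub]
      rw [← hL, ← hRt, sub_self]
  have ha0 : ∀ k : ℤ, k < i₀ ∨ i₁ < k → a k = 0 := by
    intro k hk
    have hqk : q k = 0 := by
      rcases hk with hk | hk
      · rw [hqdef]; simp [hpleft k hk, hpleft (k - 1) (by omega)]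
      · rw [hqdef]; simp [hpright k (by omega), hpright (k - 1) (by omega)]
    rw [hadef]
    simp [hqk]
  have htel : ∀ i : ℤ, i₀ - 1 ≤ i → p i = ∑ k ∈ Finset.Icc i₀ i, q k := by
    refine Int.le_induction ?_ ?_
    · rw [hpleft (i₀ - 1) (by omega)]
      rw [Finset.Icc_eq_empty (by omega)]
      simp
    · intro n hn ih
      have hins : Finset.Icc i₀ (n + 1) = insert (n + 1) (Finset.Icc i₀ n) := by
        ext z
        simp only [Finset.mem_Icc, Finset.mem_insert]
        omega
      rw [hins, Finset.sum_insert (by simp only [Finset.mem_Icc]; omega), ← ih]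
      show p (n + 1) = (p (n + 1) - p (n + 1 - 1)) + p n
      rw [show n + 1 - 1 = n by ring]
      ring
  have hafin : (Function.support a).Finite := by
    apply (Set.finite_Icc i₀ i₁).subset
    intro k hk
    rw [Set.mem_Icc]
    constructor
    · by_contra hcon
      exact hk (ha0 k (Or.inl (by omega)))
    · by_contra hcon
      exact hk (ha0 k (Or.inr (by omega)))
  have hrep : ∀ t, s t = ∑ᶠ k, a k * truncPow (T k) (m - 1) t := by
    intro t
    obtain ⟨i, hti1, hti2⟩ : ∃ i : ℤ, T i < t ∧ t ≤ T (i + 1) := by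
      obtain ⟨u, hu⟩ := (hTop.eventually_ge_atTop t).exists
      obtain ⟨l, hl⟩ := (hBot.eventually_le_atBot (t - 1)).exists
      obtain ⟨n, hn, hmin⟩ := Int.exists_least_of_bdd (P := fun z => t ≤ T z)
        ⟨l, fun z hz => by
          by_contra hcon
          have : T z ≤ T l := hT.monotone (by omega)
          linarith⟩ ⟨u, hu⟩
      refine ⟨n - 1, ?_, by rw [show n - 1 + 1 = n by ring]; exact hn⟩
      by_contra hcon
      have := hmin (n - 1) (by linarith)
      omega
    have hf : ∑ᶠ k, a k * truncPow (T k) (m - 1) t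
        = ∑ k ∈ Finset.Icc i₀ i, a k * truncPow (T k) (m - 1) t := by
      apply finsum_eq_finset_sum_of_support_subset
      intro k hk
      simp only [Function.mem_support] at hk
      by_contra hknot
      simp only [Finset.coe_Icc, Set.mem_Icc, not_and_or, not_le] at hknot
      rcases hknot with h | h
      · exact hk (by rw [ha0 k (Or.inl h)]; ring)
      · have h2 : T (i + 1) ≤ T k := hT.monotone (by omega)
        have h3 : truncPow (T k) (m - 1) t = 0 := if_neg (not_lt.mpr (le_trans hti2 h2))
        exact hk (by rw [h3]; ring)
    rw [hf, hp i t ⟨hti1, hti2⟩]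
    rcases lt_or_ge i i₀ with hii | hii
    · rw [hpleft i hii, Finset.Icc_eq_empty (by omega)]
      simp
    · rw [htel i (by omega), Polynomial.eval_finset_sum]
      apply Finset.sum_congr rfl
      intro k hk
      rw [hq k]
      have hkt : T k < t := lt_of_le_of_lt (hT.monotone (Finset.mem_Icc.mp hk).2) hti1
      have h4 : truncPow (T k) (m - 1) t = (t - T k) ^ (m - 1) := if_pos hkt
      rw [h4]
      simp [eval_mul, eval_pow]
  refine ⟨a, ⟨hafin, hrep⟩, ?_⟩
  rintro b ⟨hbfin, hbrep⟩
  have hczero : ∀ t, ∑ᶠ k, (b k - a k) * truncPow (T k) (m - 1) t = 0 := by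
    intro t
    have hsplit : (fun k => (b k - a k) * truncPow (T k) (m - 1) t)
        = fun k => b k * truncPow (T k) (m - 1) t - a k * truncPow (T k) (m - 1) t :=
      funext fun k => sub_mul _ _ _
    rw [hsplit, finsum_sub_distrib
        (hbfin.subset (Function.support_mul_subset_left _ _))
        (hafin.subset (Function.support_mul_subset_left _ _)),
      ← hbrep t, ← hrep t, sub_self]
  have hkey : ∀ k, b k - a k = 0 := by
    by_contra hcon
    push_neg at hcon
    obtain ⟨k', hk'⟩ := hcon
    have hcfin : (Function.support (fun k => b k - a k)).Finite := by
      apply (hbfin.union hafin).subset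
      intro z hz
      simp only [Function.mem_support] at hz
      by_contra hzc
      simp only [Set.mem_union, Function.mem_support, not_or, not_not] at hzc
      rw [hzc.1, hzc.2, sub_self] at hz
      exact hz rfl
    have hnemp : hcfin.toFinset.Nonempty := ⟨k', by simpa using hk'⟩
    set k0 := hcfin.toFinset.min' hnemp with hk0def
    have hk0mem : b k0 - a k0 ≠ 0 := by
      have := hcfin.toFinset.min'_mem hnemp
      simpa using this
    have hk0min : ∀ z, b z - a z ≠ 0 → k0 ≤ z := fun z hz =>
      hcfin.toFinset.min'_le z (by simpa using hz)
    set t := T (k0 + 1) with htdef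
    have hsingle : ∑ᶠ k, (b k - a k) * truncPow (T k) (m - 1) t
        = (b k0 - a k0) * truncPow (T k0) (m - 1) t := by
      apply finsum_eq_single
      intro z hz
      rcases eq_or_ne (b z - a z) 0 with h | h
      · rw [h]; ring
      · have h1 : k0 < z := lt_of_le_of_ne (hk0min z h) (Ne.symm hz)
        have h2 : t ≤ T z := hT.monotone (by omega)
        have h3 : truncPow (T z) (m - 1) t = 0 := if_neg (not_lt.mpr h2)
        rw [h3]; ring
    rw [hczero t] at hsingle
    have hpos : T k0 < t := hT (lt_add_one k0)
    have h4 : truncPow (T k0) (m - 1) t = (t - T k0) ^ (m - 1) := if_pos hpos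
    rw [h4] at hsingle
    have h5 : (t - T k0) ^ (m - 1) ≠ 0 := pow_ne_zero _ (by linarith)
    rcases mul_eq_zero.mp hsingle.symm with h | h
    · exact hk0mem h
    · exact h5 h
  funext k
  have := hkey k
  linarith

end MainSplineRep
end AuxSplineRep
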